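/- The properties S₁(Ω,T*) and Sfin(Ω,T*) are closed under taking finite powers: if a set of real numbers X satisfies S₁(Ω,T*) (respectively, Sfin(Ω,T*)), then for each k ∈ ℕ the power X^k, equipped with the product topology, satisfies S₁(Ω,T*) (respectively, Sfin(Ω,T*)), where now Ω and T* denote the collections of countable open ω-covers and τ*-covers of X^k. -/

import Mathlib

open Set

namespace TauCoverPaper

/-- `a ⊆* b`: `a \ b` is finite. -/
def AlmostSubset (a b : Set ℕ) : Prop := (a \ b).Finite

/-- `Y` is linearly quasiordered by `⊆*`. -/
def LinQuasi (Y : Set (Set ℕ)) : Prop :=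
  ∀ a ∈ Y, ∀ b ∈ Y, AlmostSubset a b ∨ AlmostSubset b a

/-- `a` is a pseudo-intersection of the family `Y`. -/
def PseudoIntersection (a : Set ℕ) (Y : Set (Set ℕ)) : Prop :=
  a.Infinite ∧ ∀ b ∈ Y, AlmostSubset a b

/-- `Y` is centered: every nonempty finite subfamily has infinite intersection. -/
def Centered (Y : Set (Set ℕ)) : Prop :=
  ∀ F : Set (Set ℕ), F ⊆ Y → F.Finite → F.Nonempty → (⋂₀ F).Infinite

/-- A tower: a family of infinite subsets of `ℕ`, linearly quasiordered by `⊆*`,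
with no pseudo-intersection. -/
def IsTower (Y : Set (Set ℕ)) : Prop :=
  (∀ a ∈ Y, a.Infinite) ∧ LinQuasi Y ∧ ¬ ∃ a, PseudoIntersection a Y

variable {α : Type}

/-- A cover of the space `α`: the union is everything, and the whole space is
not a member. -/
def IsCover (𝒰 : Set (Set α)) : Prop := ⋃₀ 𝒰 = univ ∧ univ ∉ 𝒰

/-- A large cover: each point belongs to infinitely many members. -/
def IsLargeCover (𝒰 : Set (Set α)) : Prop :=
  IsCover 𝒰 ∧ ∀ x : α, {U ∈ 𝒰 | x ∈ U}.Infinite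

/-- An ω-cover: each finite set is contained in some member. -/
def IsOmegaCover (𝒰 : Set (Set α)) : Prop :=
  IsCover 𝒰 ∧ ∀ F : Set α, F.Finite → ∃ U ∈ 𝒰, F ⊆ U

/-- A γ-cover: infinite, and each point belongs to all but finitely many members. -/
def IsGammaCover (𝒰 : Set (Set α)) : Prop :=
  IsCover 𝒰 ∧ 𝒰.Infinite ∧ ∀ x : α, {U ∈ 𝒰 | x ∉ U}.Finite

/-- A τ-cover: a large cover such that for all `x, y`, one of the sets
`{U : x ∈ U, y ∉ U}`, `{U : y ∈ U, x ∉ U}` is finite. -/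
def IsTauCover (𝒰 : Set (Set α)) : Prop :=
  IsLargeCover 𝒰 ∧ ∀ x y : α,
    {U ∈ 𝒰 | x ∈ U ∧ y ∉ U}.Finite ∨ {U ∈ 𝒰 | y ∈ U ∧ x ∉ U}.Finite

/-- A τ*-cover: a large, countably infinite cover which, enumerated bijectively
as `⟨Uₙ⟩`, admits for each point `y` an infinite `r y ⊆ {n | y ∈ Uₙ}` such that
the family `{r y}` is linearly quasiordered by `⊆*`. -/
def IsTauStarCover (𝒰 : Set (Set α)) : Prop :=
  IsLargeCover 𝒰 ∧
  ∃ U : ℕ → Set α, Function.Injective U ∧ Set.range U = 𝒰 ∧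
    ∃ r : α → Set ℕ,
      (∀ y : α, (r y).Infinite ∧ r y ⊆ {n | y ∈ U n}) ∧
      (∀ y z : α, AlmostSubset (r y) (r z) ∨ AlmostSubset (r z) (r y))

/-- Ω : countable open ω-covers. -/
def OpenOmega (α : Type) [TopologicalSpace α] : Set (Set (Set α)) :=
  {𝒰 | 𝒰.Countable ∧ (∀ U ∈ 𝒰, IsOpen U) ∧ IsOmegaCover 𝒰}

/-- Γ : countable open γ-covers. -/
def OpenGamma (α : Type) [TopologicalSpace α] : Set (Set (Set α)) :=
  {𝒰 | 𝒰.Countable ∧ (∀ U ∈ 𝒰, IsOpen U) ∧ IsGammaCover 𝒰}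

/-- T : countable open τ-covers. -/
def OpenTau (α : Type) [TopologicalSpace α] : Set (Set (Set α)) :=
  {𝒰 | 𝒰.Countable ∧ (∀ U ∈ 𝒰, IsOpen U) ∧ IsTauCover 𝒰}

/-- T* : countable open τ*-covers. -/
def OpenTauStar (α : Type) [TopologicalSpace α] : Set (Set (Set α)) :=
  {𝒰 | 𝒰.Countable ∧ (∀ U ∈ 𝒰, IsOpen U) ∧ IsTauStarCover 𝒰}

/-- B_Ω : countable Borel ω-covers. -/
def BorelOmega (α : Type) [MeasurableSpace α] : Set (Set (Set α)) :=
  {𝒰 | 𝒰.Countable ∧ (∀ U ∈ 𝒰, MeasurableSet U) ∧ IsOmegaCover 𝒰}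

/-- B_Γ : countable Borel γ-covers. -/
def BorelGamma (α : Type) [MeasurableSpace α] : Set (Set (Set α)) :=
  {𝒰 | 𝒰.Countable ∧ (∀ U ∈ 𝒰, MeasurableSet U) ∧ IsGammaCover 𝒰}

/-- B_T : countable Borel τ-covers. -/
def BorelTau (α : Type) [MeasurableSpace α] : Set (Set (Set α)) :=
  {𝒰 | 𝒰.Countable ∧ (∀ U ∈ 𝒰, MeasurableSet U) ∧ IsTauCover 𝒰}

/-- The selection principle S₁(𝔘,𝔙). -/
def S1 (𝔘 𝔙 : Set (Set (Set α))) : Prop :=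
  ∀ 𝒰 : ℕ → Set (Set α), (∀ n, 𝒰 n ∈ 𝔘) →
    ∃ V : ℕ → Set α, (∀ n, V n ∈ 𝒰 n) ∧ Set.range V ∈ 𝔙

/-- The selection principle Sfin(𝔘,𝔙). -/
def Sfin (𝔘 𝔙 : Set (Set (Set α))) : Prop :=
  ∀ 𝒰 : ℕ → Set (Set α), (∀ n, 𝒰 n ∈ 𝔘) →
    ∃ F : ℕ → Set (Set α), (∀ n, (F n).Finite ∧ F n ⊆ 𝒰 n) ∧ (⋃ n, F n) ∈ 𝔙

/-- The selection principle Ufin(𝔘,𝔙). -/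
def Ufin (𝔘 𝔙 : Set (Set (Set α))) : Prop :=
  ∀ 𝒰 : ℕ → Set (Set α), (∀ n, 𝒰 n ∈ 𝔘) →
    (∀ n, ¬ ∃ F : Set (Set α), F ⊆ 𝒰 n ∧ F.Finite ∧ ⋃₀ F = univ) →
    ∃ F : ℕ → Set (Set α), (∀ n, (F n).Finite ∧ F n ⊆ 𝒰 n) ∧
      Set.range (fun n => ⋃₀ (F n)) ∈ 𝔙

/-- binom(𝔘,𝔙): each member of 𝔘 contains a subfamily belonging to 𝔙. -/
def Binom (𝔘 𝔙 : Set (Set (Set α))) : Prop :=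
  ∀ 𝒰 ∈ 𝔘, ∃ 𝒱 ⊆ 𝒰, 𝒱 ∈ 𝔙

/-- Borel measurability of a map into `P(ℕ)` (identified with the Cantor
space via characteristic functions): each coordinate is measurable. -/
def BorelMeasSets {β : Type} [MeasurableSpace β] (f : β → Set ℕ) : Prop :=
  ∀ n : ℕ, MeasurableSet {x | n ∈ f x}

/-- The excluded middle property for a family `Y ⊆ ℕ^ℕ`. -/
def ExcludedMiddleProp (Y : Set (ℕ → ℕ)) : Prop :=
  ∃ g : ℕ → ℕ,
    (∀ f ∈ Y, {n | f n < g n}.Infinite) ∧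
    ∀ f ∈ Y, ∀ h ∈ Y,
      {n | f n < g n ∧ g n ≤ h n}.Finite ∨ {n | h n < g n ∧ g n ≤ f n}.Finite

/-- non(J): the minimal cardinality of a set of reals not satisfying `J`. -/
noncomputable def nonCard (J : Set ℝ → Prop) : Cardinal :=
  sInf {c : Cardinal | ∃ X : Set ℝ, ¬ J X ∧ Cardinal.mk ↥X = c}

/-- add(J): the minimal cardinality of a family of sets of reals, each
satisfying `J`, whose union does not satisfy `J`. -/
noncomputable def addCard (J : Set ℝ → Prop) : Cardinal :=
  sInf {c : Cardinal | ∃ 𝔉 : Set (Set ℝ),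
    (∀ A ∈ 𝔉, J A) ∧ ¬ J (⋃₀ 𝔉) ∧ Cardinal.mk ↥𝔉 = c}

/-- 𝔱 : the minimal cardinality of a tower. -/
noncomputable def towerCard : Cardinal :=
  sInf {c : Cardinal | ∃ Y : Set (Set ℕ), IsTower Y ∧ Cardinal.mk ↥Y = c}

/-! By the tube lemma, the finite unions `U` of basic open sets whose power `Uᵏ` lies inside a
member of a given ω-cover of `Xᵏ` form a countable open ω-cover of `X`.  Selecting from these
covers in `X` and replacing each selected `U` by such a member transports the selection to `Xᵏ`.  A point `z` of `Xᵏ` is refined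
by the intersection of the index sets refining its coordinates: by linearity this intersection
agrees with the smallest of them up to a finite set, so these intersections are again
linearly quasiordered by `⊆*`.  Each member of the ω-cover of `Xᵏ` receives a natural label,
and the `m`-th selection only uses members with label at least `m`; hence each member is
selected finitely often, which keeps the refining index sets infinite. -/

namespace AlmostSubset

theorem refl (a : Set ℕ) : AlmostSubset a a := by
  simp [AlmostSubset]

theorem of_subset {a b : Set ℕ} (h : a ⊆ b) : AlmostSubset a b := by
  simp [AlmostSubset, sdiff_eq_empty.2 h]

theorem trans {a b c : Set ℕ} (hab : AlmostSubset a b) (hbc : AlmostSubset b c) :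
    AlmostSubset a c :=
  (Set.Finite.union hab hbc).subset (sdiff_triangle a b c)

theorem iInter {ι : Type} [Finite ι] {a : Set ℕ} {t : ι → Set ℕ}
    (h : ∀ i, AlmostSubset a (t i)) : AlmostSubset a (⋂ i, t i) := by
  rw [AlmostSubset, sdiff_iInter]
  exact finite_iUnion h

theorem image {a b : Set ℕ} (σ : ℕ → ℕ) (h : AlmostSubset a b) :
    AlmostSubset (σ '' a) (σ '' b) :=
  (Set.Finite.image σ h).subset <| by
    rintro _ ⟨⟨n, hn, rfl⟩, hnb⟩
    exact ⟨n, ⟨hn, fun hb => hnb ⟨n, hb, rfl⟩⟩, rfl⟩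

end AlmostSubset

theorem exists_almostSubset_iInter {ι : Type} [Finite ι] [Nonempty ι] {t : ι → Set ℕ}
    (h : ∀ i j, AlmostSubset (t i) (t j) ∨ AlmostSubset (t j) (t i)) :
    ∃ i, AlmostSubset (t i) (⋂ j, t j) := by
  have : IsTrans (Set ℕ) (fun a b => AlmostSubset b a) := ⟨fun _ _ _ h₁ h₂ => h₂.trans h₁⟩
  have hdir : Directed (fun a b => AlmostSubset b a) t := fun i j =>
    (h i j).elim (fun hij => ⟨i, .refl _, hij⟩) (fun hji => ⟨j, hji, .refl _⟩)
  obtain ⟨i, hi⟩ := hdir.finite_le id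
  exact ⟨i, AlmostSubset.iInter hi⟩

theorem _root_.Set.Infinite.image_of_finite_fibers {β : Type} {f : α → β}
    (hf : ∀ b, (f ⁻¹' {b}).Finite) {s : Set α} (hs : s.Infinite) : (f '' s).Infinite :=
  fun h => hs ((h.preimage' fun b _ => hf b).subset (subset_preimage_image f s))

theorem exists_injective_nat_range_eq {s : Set α} (hc : s.Countable) (hi : s.Infinite) :
    ∃ T : ℕ → α, Function.Injective T ∧ range T = s := by
  have := hc.to_subtype
  have := hi.to_subtype
  obtain ⟨e⟩ := nonempty_equiv_of_countable (α := ℕ) (β := s)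
  exact ⟨(↑) ∘ e, Subtype.val_injective.comp e.injective, by
    rw [e.surjective.range_comp, Subtype.range_coe]⟩

theorem IsCover.ne_univ {𝒰 : Set (Set α)} (h : IsCover 𝒰) {U : Set α} (hU : U ∈ 𝒰) :
    U ≠ univ :=
  fun hUuniv => h.2 (hUuniv ▸ hU)

theorem IsOmegaCover.of_forall_finite {𝒰 : Set (Set α)} (huniv : univ ∉ 𝒰)
    (h : ∀ F : Set α, F.Finite → ∃ U ∈ 𝒰, F ⊆ U) : IsOmegaCover 𝒰 := by
  refine ⟨⟨eq_univ_of_forall fun x => ?_, huniv⟩, h⟩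
  obtain ⟨U, hU, hxU⟩ := h {x} (finite_singleton x)
  exact ⟨U, hU, hxU rfl⟩

/-- Members are proper subsets, so finitely many of them can be avoided by adding one point
outside each to `F`. -/
theorem IsOmegaCover.infinite_setOf_subset {𝒰 : Set (Set α)} (h : IsOmegaCover 𝒰)
    {F : Set α} (hF : F.Finite) : {U ∈ 𝒰 | F ⊆ U}.Infinite := by
  intro hfin
  have := hfin.to_subtype
  choose x hx using fun U : {U ∈ 𝒰 | F ⊆ U} =>
    (ne_univ_iff_exists_notMem _).1 (h.1.ne_univ U.2.1)
  obtain ⟨U, hU, hFU⟩ := h.2 _ (hF.union (finite_range x))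
  exact hx ⟨U, hU, subset_union_left.trans hFU⟩ (hFU (Or.inr (mem_range_self _)))

def IsLinearlyRefinable (U : ℕ → Set α) : Prop :=
  ∃ r : α → Set ℕ, (∀ y : α, (r y).Infinite ∧ r y ⊆ {n | y ∈ U n}) ∧
    (∀ y z : α, AlmostSubset (r y) (r z) ∨ AlmostSubset (r z) (r y))

namespace IsLinearlyRefinable

theorem reindex {U V : ℕ → Set α} (hU : IsLinearlyRefinable U) {σ : ℕ → ℕ}
    (hσ : ∀ p, (σ ⁻¹' {p}).Finite) (hUV : ∀ n, U n ⊆ V (σ n)) : IsLinearlyRefinable V := by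
  obtain ⟨r, hr, hlin⟩ := hU
  refine ⟨fun y => σ '' r y, fun y => ⟨(hr y).1.image_of_finite_fibers hσ, ?_⟩,
    fun y z => (hlin y z).imp (.image σ) (.image σ)⟩
  rintro _ ⟨n, hn, rfl⟩
  exact hUV n ((hr y).2 hn)

theorem mono {U V : ℕ → Set α} (hU : IsLinearlyRefinable U) (hUV : ∀ n, U n ⊆ V n) :
    IsLinearlyRefinable V :=
  hU.reindex (σ := id) (fun p => finite_singleton p) hUV

theorem pi {ι : Type} [Finite ι] {U : ℕ → Set α} (hU : IsLinearlyRefinable U) :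
    IsLinearlyRefinable fun n => univ.pi fun _ : ι => U n := by
  obtain ⟨r, hr, hlin⟩ := hU
  rcases isEmpty_or_nonempty ι with hι | hι
  · exact ⟨fun _ => univ, fun _ => ⟨infinite_univ, fun n _ => by simp⟩,
      fun _ _ => .inl (.refl _)⟩
  choose i hi using fun z : ι → α => exists_almostSubset_iInter fun j k => hlin (z j) (z k)
  refine ⟨fun z => ⋂ j, r (z j), fun z => ⟨?_, ?_⟩, fun z w => ?_⟩
  · refine ((hr (z (i z))).1.sdiff (hi z)).mono ?_
    rw [sdiff_sdiff_right_self]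
    exact inter_subset_right
  · exact fun n hn => mem_univ_pi.2 fun j => (hr (z j)).2 (mem_iInter.1 hn j)
  · have hlower : ∀ z : ι → α, AlmostSubset (⋂ j, r (z j)) (r (z (i z))) :=
      fun z => .of_subset (iInter_subset _ _)
    exact (hlin (z (i z)) (w (i w))).imp
      (fun h => ((hlower z).trans h).trans (hi w)) (fun h => ((hlower w).trans h).trans (hi z))

theorem isTauStarCover_range {W : ℕ → Set α} (hW : IsLinearlyRefinable W)
    (huniv : ∀ n, W n ≠ univ) (hfib : ∀ S, (W ⁻¹' {S}).Finite) :
    IsTauStarCover (range W) := by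
  have hinf : (range W).Infinite := fun h =>
    infinite_univ ((h.preimage' fun S _ => hfib S).subset fun n _ => mem_range_self n)
  obtain ⟨T, hTinj, hTrange⟩ := exists_injective_nat_range_eq (countable_range W) hinf
  choose σ hσ using fun n => (hTrange ▸ mem_range_self n : W n ∈ range T)
  have hT : IsLinearlyRefinable T :=
    hW.reindex (σ := σ)
      (fun p => (hfib (T p)).subset fun n hn => (mem_singleton_iff.1 hn) ▸ (hσ n).symm)
      fun n => (hσ n).ge
  refine ⟨⟨⟨eq_univ_of_forall fun y => ?_, fun ⟨n, hn⟩ => huniv n hn⟩, fun y => ?_⟩,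
    T, hTinj, hTrange, hT⟩
  · obtain ⟨r, hr, -⟩ := hW
    obtain ⟨n, hn⟩ := (hr y).1.nonempty
    exact ⟨W n, mem_range_self n, (hr y).2 hn⟩
  · obtain ⟨r, hr, -⟩ := hT
    refine ((hr y).1.image hTinj.injOn).mono ?_
    rintro _ ⟨p, hp, rfl⟩
    exact ⟨hTrange ▸ mem_range_self p, (hr y).2 hp⟩

theorem range_mem_openTauStar [TopologicalSpace α] {W : ℕ → Set α}
    (hW : IsLinearlyRefinable W) (hopen : ∀ n, IsOpen (W n)) (huniv : ∀ n, W n ≠ univ)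
    (hfib : ∀ S, (W ⁻¹' {S}).Finite) : range W ∈ OpenTauStar α :=
  ⟨countable_range W, forall_mem_range.2 hopen, hW.isTauStarCover_range huniv hfib⟩

end IsLinearlyRefinable

theorem IsTauStarCover.isLinearlyRefinable_of_subset_range {𝒰 : Set (Set α)}
    (h : IsTauStarCover 𝒰) {V : ℕ → Set α} (hV : 𝒰 ⊆ range V) : IsLinearlyRefinable V := by
  obtain ⟨-, U, hUinj, hUrange, hU⟩ := h
  choose σ hσ using fun n => hV (hUrange ▸ mem_range_self n)
  have hσinj : Function.Injective σ := fun n n' h => hUinj (by rw [← hσ n, ← hσ n', h])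
  exact IsLinearlyRefinable.reindex hU (fun p => (subsingleton_singleton.preimage hσinj).finite)
    fun n => (hσ n).ge

section Power

variable {γ ι : Type} [TopologicalSpace γ]

theorem exists_isOpen_pi_subset [Finite ι] {F : Set γ} (hF : F.Finite) {W : Set (ι → γ)}
    (hW : IsOpen W) (hFW : univ.pi (fun _ => F) ⊆ W) :
    ∃ U, IsOpen U ∧ F ⊆ U ∧ univ.pi (fun _ => U) ⊆ W := by
  have := hF.to_subtype
  choose u hu huW using fun p : ι → F =>
    isOpen_pi_iff'.1 hW (fun i => p i) (hFW (mem_univ_pi.2 fun i => (p i).2))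
  refine ⟨⋃ x : F, ⋂ (p : ι → F) (i : ι) (_ : p i = x), u p i, ?_, ?_, ?_⟩
  · exact isOpen_iUnion fun x => isOpen_iInter_of_finite fun p => isOpen_iInter_of_finite
      fun i => isOpen_iInter_of_finite fun _ => (hu p i).1
  · intro x hx
    refine mem_iUnion.2 ⟨⟨x, hx⟩, mem_iInter.2 fun p => mem_iInter.2 fun i => mem_iInter.2 ?_⟩
    intro hpx
    simpa [hpx] using (hu p i).2
  · intro g hg
    choose x hx using fun i => mem_iUnion.1 (mem_univ_pi.1 hg i)
    exact huW x (mem_univ_pi.2 fun i => mem_iInter.1 (mem_iInter.1 (mem_iInter.1 (hx i) x) i) rfl)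

theorem _root_.TopologicalSpace.IsTopologicalBasis.exists_finite_sUnion_subset
    {B : Set (Set γ)} (hB : TopologicalSpace.IsTopologicalBasis B) {F U : Set γ}
    (hF : F.Finite) (hU : IsOpen U) (hFU : F ⊆ U) :
    ∃ S ⊆ B, S.Finite ∧ F ⊆ ⋃₀ S ∧ ⋃₀ S ⊆ U := by
  have := hF.to_subtype
  choose b hbB hxb hbU using fun x : F => hB.exists_subset_of_mem_open (hFU x.2) hU
  exact ⟨range b, range_subset_iff.2 hbB, finite_range b,
    fun x hx => mem_sUnion_of_mem (hxb ⟨x, hx⟩) (mem_range_self _),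
    sUnion_subset (forall_mem_range.2 hbU)⟩

variable [SecondCountableTopology γ]

def powerSubsetCover (𝒲 : Set (Set (ι → γ))) (c : Set (ι → γ) → ℕ) (m : ℕ) : Set (Set γ) :=
  {U ∈ sUnion '' {S | S.Finite ∧ S ⊆ TopologicalSpace.countableBasis γ} |
    ∃ W ∈ 𝒲, m ≤ c W ∧ univ.pi (fun _ => U) ⊆ W}

theorem powerSubsetCover_mem_openOmega [Finite ι] {𝒲 : Set (Set (ι → γ))}
    (h𝒲 : 𝒲 ∈ OpenOmega (ι → γ)) {c : Set (ι → γ) → ℕ} (hc : InjOn c 𝒲) (m : ℕ) :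
    powerSubsetCover 𝒲 c m ∈ OpenOmega γ := by
  obtain ⟨-, h𝒲open, h𝒲ω⟩ := h𝒲
  have hB := TopologicalSpace.isBasis_countableBasis γ
  refine ⟨((countable_ofPred_finite_subset (TopologicalSpace.countable_countableBasis γ)).image
    sUnion).mono fun U hU => hU.1, ?_, .of_forall_finite ?_ fun F hF => ?_⟩
  · rintro _ ⟨⟨S, ⟨-, hSB⟩, rfl⟩, -⟩
    exact isOpen_sUnion fun s hs => hB.isOpen (hSB hs)
  · rintro ⟨-, W, hW, -, hsub⟩
    rw [pi_univ, univ_subset_iff] at hsub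
    exact h𝒲ω.1.2 (hsub ▸ hW)
  · obtain ⟨_, ⟨W, ⟨hW, hFW⟩, rfl⟩, hmW⟩ :=
      ((h𝒲ω.infinite_setOf_subset (Finite.pi fun _ : ι => hF)).image
        (hc.mono (sep_subset _ _))).exists_gt m
    obtain ⟨U, hUopen, hFU, hUW⟩ := exists_isOpen_pi_subset hF (h𝒲open W hW) hFW
    obtain ⟨S, hSB, hSfin, hFS, hSU⟩ := hB.exists_finite_sUnion_subset hF hUopen hFU
    exact ⟨⋃₀ S, ⟨⟨S, ⟨hSfin, hSB⟩, rfl⟩, W, hW, hmW.le,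
      (pi_mono fun _ _ => hSU).trans hUW⟩, hFS⟩

theorem exists_forall_powerSubsetCover_mem_openOmega [Finite ι]
    {𝒲 : ℕ → Set (Set (ι → γ))} (h𝒲 : ∀ m, 𝒲 m ∈ OpenOmega (ι → γ)) :
    ∃ c, ∀ m, powerSubsetCover (𝒲 m) c m ∈ OpenOmega γ := by
  obtain ⟨c, hc⟩ := countable_iff_exists_injOn.1 (countable_iUnion fun m => (h𝒲 m).1)
  exact ⟨c, fun m => powerSubsetCover_mem_openOmega (h𝒲 m) (hc.mono (subset_iUnion 𝒲 m)) m⟩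

theorem s1_openOmega_openTauStar_pi [Finite ι] (h : S1 (OpenOmega γ) (OpenTauStar γ)) :
    S1 (OpenOmega (ι → γ)) (OpenTauStar (ι → γ)) := by
  intro 𝒲 h𝒲
  obtain ⟨c, h𝒱⟩ := exists_forall_powerSubsetCover_mem_openOmega h𝒲
  obtain ⟨V, hV𝒱, hVτ⟩ := h _ h𝒱
  choose W hW𝒲 hmW hVW using fun m => (hV𝒱 m).2
  refine ⟨W, hW𝒲, ((hVτ.2.2.isLinearlyRefinable_of_subset_range subset_rfl).pi.mono hVW)
    |>.range_mem_openTauStar (fun m => (h𝒲 m).2.1 _ (hW𝒲 m))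
      (fun m => (h𝒲 m).2.2.1.ne_univ (hW𝒲 m)) fun S => (finite_Iic (c S)).subset ?_⟩
  rintro m rfl
  exact hmW m

theorem sfin_openOmega_openTauStar_pi [Finite ι] (h : Sfin (OpenOmega γ) (OpenTauStar γ)) :
    Sfin (OpenOmega (ι → γ)) (OpenTauStar (ι → γ)) := by
  intro 𝒲 h𝒲
  obtain ⟨c, h𝒱⟩ := exists_forall_powerSubsetCover_mem_openOmega h𝒲
  obtain ⟨F, hF, hFτ⟩ := h _ h𝒱
  obtain ⟨-, U, hUinj, hUrange, hU⟩ := hFτ.2.2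
  choose idx hidx using fun n => mem_iUnion.1 (hUrange ▸ mem_range_self n : U n ∈ ⋃ m, F m)
  choose W hW𝒲 hmW hUW using fun n => ((hF (idx n)).2 (hidx n)).2
  have hidx_fib : ∀ m, (idx ⁻¹' {m}).Finite := fun m =>
    ((hF m).1.preimage hUinj.injOn).subset fun n hn => (mem_singleton_iff.1 hn) ▸ hidx n
  refine ⟨fun m => W '' (idx ⁻¹' {m}), fun m => ⟨(hidx_fib m).image W, ?_⟩, ?_⟩
  · rintro _ ⟨n, rfl, rfl⟩
    exact hW𝒲 n
  · have hrange : ⋃ m, W '' (idx ⁻¹' {m}) = range W := by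
      ext
      simp
    rw [hrange]
    refine (IsLinearlyRefinable.pi hU |>.mono hUW).range_mem_openTauStar
      (fun n => (h𝒲 _).2.1 _ (hW𝒲 n)) (fun n => (h𝒲 _).2.2.1.ne_univ (hW𝒲 n))
      fun S => ((finite_Iic (c S)).preimage' fun m _ => hidx_fib m).subset ?_
    rintro n rfl
    exact hmW n

end Power

theorem statement19_general (X : Set ℝ) (k : ℕ) :
    (S1 (OpenOmega ↥X) (OpenTauStar ↥X) →
      S1 (OpenOmega (Fin k → ↥X)) (OpenTauStar (Fin k → ↥X))) ∧
    (Sfin (OpenOmega ↥X) (OpenTauStar ↥X) →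
      Sfin (OpenOmega (Fin k → ↥X)) (OpenTauStar (Fin k → ↥X))) :=
  ⟨s1_openOmega_openTauStar_pi, sfin_openOmega_openTauStar_pi⟩

/-- S₁(Ω,T*) and Sfin(Ω,T*) are closed under taking finite powers: if `X`
satisfies the property, so does `X^k` with the product topology. -/
theorem statement19 (X : Set ℝ) (hX : X.Infinite) (k : ℕ) :
    (S1 (OpenOmega ↥X) (OpenTauStar ↥X) →
      S1 (OpenOmega (Fin k → ↥X)) (OpenTauStar (Fin k → ↥X))) ∧
    (Sfin (OpenOmega ↥X) (OpenTauStar ↥X) →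
      Sfin (OpenOmega (Fin k → ↥X)) (OpenTauStar (Fin k → ↥X))) :=
  statement19_general X k

end TauCoverPaper
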